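/- arXiv:2002.05145 — 2 statements merged into one kernel-verified Lean document; each statement's English description precedes it below -/
import Mathlib

section
/- Positive-unlabeled learning: let X be a measurable space, p ∈ (0,1), q ∈ (0,1), F_+, F_− probability measures on X, F = p F_+ + (1−p) F_−, and let P, P' on X×{−1,+1} be given by P(A×{+1}) = p F_+(A), P(A×{−1}) = (1−p) F_−(A), P'(A×{+1}) = q F_+(A), P'(A×{−1}) = (1−q) F(A). Let η : X → [0,1] be a measurable function satisfying η(x) = p (dF_+/dF)(x) for F-almost every x (a version of the posterior probability P{Y=+1 | X=x}). Then for P'-almost every (x,y), the Radon–Nikodym derivative satisfies (dP/dP')(x,y) = (p/q) 1{y=+1} + ((1−η(x))/(1−q)) 1{y=−1}. -/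
/-!
The label-wise description of `P` and `P'` exhibits `P` as `P'` with density
`g(x, +1) = p / q`, `g(x, -1) = (1 - η x) / (1 - q)`. On the positive fibre this is
`p F₊ = (p / q) · q F₊`. On the negative fibre it is the identity
`(1 - p) F₋ = F - p F₊ = (1 - p dF₊/dF) · F = (1 - η) · F`, the middle step because the
`F`-density of `p F₊ ≤ F` is at most `1`. The Radon–Nikodym derivative of `P'.withDensity g`
with respect to `P'` is `g` almost everywhere.
-/

open MeasureTheory

/-- The distribution on `X × Bool` described by the triplet `(p, F₊, F₋)`:
labels are encoded by `Bool` with `true ↦ +1` and `false ↦ -1`, so that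
`P(A × {+1}) = p F₊(A)` and `P(A × {-1}) = (1-p) F₋(A)`. -/
noncomputable def binMeasure {X : Type*} [MeasurableSpace X]
    (p : ℝ) (Fp Fm : Measure X) : Measure (X × Bool) :=
  ENNReal.ofReal p • Fp.map (fun x => (x, true)) +
    ENNReal.ofReal (1 - p) • Fm.map (fun x => (x, false))

open scoped ENNReal

namespace MeasureTheory

variable {α β : Type*} [MeasurableSpace α] [MeasurableSpace β]

lemma withDensity_map_eq_map_withDensity_comp (μ : Measure α) {f : α → β} (hf : Measurable f)
    {g : β → ℝ≥0∞} (hg : Measurable g) :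
    (μ.map f).withDensity g = (μ.withDensity (g ∘ f)).map f := by
  ext s hs
  rw [withDensity_apply _ hs, Measure.map_apply hf hs, withDensity_apply _ (hf hs),
    setLIntegral_map hs hg hf, Function.comp_def]

lemma smul_withDensity_div (μ : Measure α) (f : α → ℝ≥0∞) {c : ℝ≥0∞} (hc₀ : c ≠ 0)
    (hc : c ≠ ∞) :
    c • μ.withDensity (fun x => f x / c) = μ.withDensity f := by
  simp_rw [div_eq_mul_inv, mul_comm _ c⁻¹]
  rw [show (fun x => c⁻¹ * f x) = c⁻¹ • f from rfl,
    withDensity_smul' _ _ (ENNReal.inv_ne_top.2 hc₀), smul_smul, ENNReal.mul_inv_cancel hc₀ hc,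
    one_smul]

lemma withDensity_one_sub_rnDeriv_add (ν₁ ν₂ : Measure α) [IsFiniteMeasure ν₁]
    [IsFiniteMeasure ν₂] :
    (ν₁ + ν₂).withDensity (fun x => 1 - ν₁.rnDeriv (ν₁ + ν₂) x) = ν₂ := by
  set f := ν₁.rnDeriv (ν₁ + ν₂)
  have hf_le_one : f ≤ᵐ[ν₁ + ν₂] 1 :=
    Measure.rnDeriv_le_one_of_le (Measure.le_add_right le_rfl)
  rw [← Measure.add_right_inj ν₁]
  calc ν₁ + (ν₁ + ν₂).withDensity (fun x => 1 - f x)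
      = (ν₁ + ν₂).withDensity (f + fun x => 1 - f x) := by
        rw [withDensity_add_left (Measure.measurable_rnDeriv _ _),
          Measure.withDensity_rnDeriv_eq _ _ (Measure.AbsolutelyContinuous.rfl.add_right ν₂)]
    _ = (ν₁ + ν₂).withDensity (fun _ => 1) := by
        refine withDensity_congr_ae ?_
        filter_upwards [hf_le_one] with x hx using add_tsub_cancel_of_le hx
    _ = ν₁ + ν₂ := by rw [withDensity_const, one_smul]

instance isFiniteMeasure_ofReal_smul (μ : Measure α) [IsFiniteMeasure μ] (r : ℝ) :
    IsFiniteMeasure (ENNReal.ofReal r • μ) :=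
  μ.smul_finite ENNReal.ofReal_ne_top

end MeasureTheory

instance isFiniteMeasure_binMeasure {X : Type*} [MeasurableSpace X] (q : ℝ) (μ ν : Measure X)
    [IsFiniteMeasure μ] [IsFiniteMeasure ν] : IsFiniteMeasure (binMeasure q μ ν) := by
  unfold binMeasure
  infer_instance

lemma binMeasure_withDensity {X : Type*} [MeasurableSpace X] (q : ℝ) (μ ν : Measure X)
    {g : X × Bool → ℝ≥0∞} (hg : Measurable g) :
    (binMeasure q μ ν).withDensity g =
      (ENNReal.ofReal q • μ.withDensity (fun x => g (x, true))).map (fun x => (x, true)) +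
        (ENNReal.ofReal (1 - q) • ν.withDensity (fun x => g (x, false))).map
          (fun x => (x, false)) := by
  rw [binMeasure, withDensity_add_measure, withDensity_smul_measure, withDensity_smul_measure,
    withDensity_map_eq_map_withDensity_comp _ (by fun_prop) hg,
    withDensity_map_eq_map_withDensity_comp _ (by fun_prop) hg, Measure.map_smul,
    Measure.map_smul]
  rfl

lemma measurable_bool_ite {X : Type*} [MeasurableSpace X] {f₁ f₀ : X → ℝ≥0∞}
    (h₁ : Measurable f₁) (h₀ : Measurable f₀) :
    Measurable fun z : X × Bool => if z.2 then f₁ z.1 else f₀ z.1 :=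
  Measurable.ite (measurable_snd (measurableSet_singleton true)) (h₁.comp measurable_fst)
    (h₀.comp measurable_fst)

lemma binMeasure_withDensity_ite {X : Type*} [MeasurableSpace X] {q : ℝ}
    (hq : q ∈ Set.Ioo (0 : ℝ) 1) (μ ν : Measure X) (a : ℝ≥0∞) {h : X → ℝ≥0∞}
    (hh : Measurable h) :
    (binMeasure q μ ν).withDensity
        (fun z => if z.2 then a / ENNReal.ofReal q else h z.1 / ENNReal.ofReal (1 - q)) =
      a • μ.map (fun x => (x, true)) + (ν.withDensity h).map (fun x => (x, false)) := by
  rw [binMeasure_withDensity _ _ _ (measurable_bool_ite measurable_const (hh.div_const _))]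
  simp only [if_true, Bool.false_eq_true, if_false]
  have hq₀ : ENNReal.ofReal q ≠ 0 := ENNReal.ofReal_ne_zero_iff.2 hq.1
  have hq₁ : ENNReal.ofReal (1 - q) ≠ 0 := ENNReal.ofReal_ne_zero_iff.2 (sub_pos.2 hq.2)
  rw [smul_withDensity_div _ (fun _ => a) hq₀ ENNReal.ofReal_ne_top,
    smul_withDensity_div _ h hq₁ ENNReal.ofReal_ne_top, withDensity_const, Measure.map_smul]

/-- in the PU problem, if `η` is a version of the posterior
probability (`η = p · dF₊/dF` `F`-a.e. with `F = p F₊ + (1-p) F₋`), then for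
`P'`-a.e. `(x,y)`: `dP/dP'(x,y) = (p/q) 1{y=+1} + ((1-η(x))/(1-q)) 1{y=-1}`. -/
theorem rnDeriv_pu_learning_posterior
    {X : Type*} [MeasurableSpace X]
    (p q : ℝ) (hp : p ∈ Set.Ioo (0:ℝ) 1) (hq : q ∈ Set.Ioo (0:ℝ) 1)
    (Fp Fm : Measure X) [IsProbabilityMeasure Fp] [IsProbabilityMeasure Fm]
    (η : X → ℝ) (hηmeas : Measurable η) (hη01 : ∀ x, η x ∈ Set.Icc (0:ℝ) 1)
    (hη : ∀ᵐ x ∂(ENNReal.ofReal p • Fp + ENNReal.ofReal (1 - p) • Fm : Measure X),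
      η x = p * ((Fp.rnDeriv (ENNReal.ofReal p • Fp + ENNReal.ofReal (1 - p) • Fm)
        x).toReal)) :
    ∀ᵐ z : X × Bool
        ∂(binMeasure q Fp (ENNReal.ofReal p • Fp + ENNReal.ofReal (1 - p) • Fm)),
      ((binMeasure p Fp Fm).rnDeriv
          (binMeasure q Fp (ENNReal.ofReal p • Fp + ENNReal.ofReal (1 - p) • Fm))
          z).toReal =
        (p / q) * (if z.2 = true then (1:ℝ) else 0) +
          ((1 - η z.1) / (1 - q)) * (if z.2 = false then (1:ℝ) else 0) := by
  set F := ENNReal.ofReal p • Fp + ENNReal.ofReal (1 - p) • Fm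
  have hη_rnDeriv :
      ∀ᵐ x ∂F, ENNReal.ofReal (η x) = (ENNReal.ofReal p • Fp).rnDeriv F x := by
    filter_upwards [hη, Measure.rnDeriv_lt_top Fp F,
      Measure.rnDeriv_smul_left_of_ne_top Fp F ENNReal.ofReal_ne_top] with x hx hlt hsmul
    rw [hsmul, hx, ENNReal.ofReal_mul hp.1.le, ENNReal.ofReal_toReal hlt.ne, Pi.smul_apply,
      smul_eq_mul]
  have hFm : F.withDensity (fun x => ENNReal.ofReal (1 - η x)) =
      ENNReal.ofReal (1 - p) • Fm := by
    rw [← withDensity_one_sub_rnDeriv_add (ENNReal.ofReal p • Fp)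
      (ENNReal.ofReal (1 - p) • Fm)]
    refine withDensity_congr_ae ?_
    filter_upwards [hη_rnDeriv] with x hx
    rw [← hx, ENNReal.ofReal_sub _ (hη01 x).1, ENNReal.ofReal_one]
  have hh : Measurable fun x => ENNReal.ofReal (1 - η x) :=
    (measurable_const.sub hηmeas).ennreal_ofReal
  have hP := binMeasure_withDensity_ite hq Fp F (ENNReal.ofReal p) hh
  rw [hFm, Measure.map_smul, ← binMeasure] at hP
  filter_upwards [hP ▸ Measure.rnDeriv_withDensity _
    (measurable_bool_ite measurable_const (hh.div_const _))] with ⟨x, b⟩ hz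
  rw [hz]
  cases b
  · simp [ENNReal.toReal_div, ENNReal.toReal_ofReal (sub_nonneg.2 (hη01 x).2),
      ENNReal.toReal_ofReal (sub_nonneg.2 hq.2.le)]
  · simp [ENNReal.toReal_div, ENNReal.toReal_ofReal hp.1.le, ENNReal.toReal_ofReal hq.1.le]
end

section
/- Binary class-probability reweighting, deterministic bound: let p ∈ (0,1), ε ∈ (0,1/2), p' ∈ (ε, 1−ε), and let (X'_1,Y'_1),…,(X'_n,Y'_n) be points of X×{−1,+1} with n'_+ = #{i : Y'_i = +1} satisfying 0 < n'_+ < n; set n'_− = n − n'_+. Define R̃_{w*,n}(g) = (p/p')(1/n)Σ_{i:Y'_i=+1} 1{g(X'_i)=−1} + ((1−p)/(1−p'))(1/n)Σ_{i:Y'_i=−1} 1{g(X'_i)=+1} and R̃_{ŵ*,n}(g) = (p/n'_+)Σ_{i:Y'_i=+1} 1{g(X'_i)=−1} + ((1−p)/n'_−)Σ_{i:Y'_i=−1} 1{g(X'_i)=+1}. Then for every classifier g : X → {−1,+1}, |R̃_{ŵ*,n}(g) − R̃_{w*,n}(g)| ≤ (|n'_+/n − p'|/ε²) · (1 + |n'_+/n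 − p'| · (p/(n'_+/n) + (1−p)/(1 − n'_+/n))). -/
/-- Number of positive labels `n'₊` in the sample (labels encoded by `Bool`,
`true ↦ +1`, `false ↦ -1`). -/
def nPos {X : Type*} {n : ℕ} (ω : Fin n → X × Bool) : ℕ :=
  (Finset.univ.filter fun i => (ω i).2 = true).card

/-- `Σ_{i : Y'ᵢ = +1} 1{g(X'ᵢ) = -1}`. -/
noncomputable def posErr {X : Type*} {n : ℕ} (ω : Fin n → X × Bool) (g : X → Bool) : ℝ :=
  ∑ i, if (ω i).2 = true ∧ g (ω i).1 = false then (1:ℝ) else 0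

/-- `Σ_{i : Y'ᵢ = -1} 1{g(X'ᵢ) = +1}`. -/
noncomputable def negErr {X : Type*} {n : ℕ} (ω : Fin n → X × Bool) (g : X → Bool) : ℝ :=
  ∑ i, if (ω i).2 = false ∧ g (ω i).1 = true then (1:ℝ) else 0

/-! Write `q = n'₊ / n`. In each class, with weight `c ∈ {p, 1 - p}` and `p'₊ = p'`,
`p'₋ = 1 - p'`, the two weightings differ by the factor `c (1 / n'_± - 1 / (n p'_±))`, and the
error count it multiplies is at most `n'_±`; so that class contributes at most
`c |q - p'| / p'_±`. As `p'_± ≥ ε` and the two class weights sum to one, the deviation is at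
most `|q - p'| / ε`, which is below the stated bound because `ε < 1`. -/

section Sample

variable {X : Type*} {n : ℕ} (ω : Fin n → X × Bool) (g : X → Bool)

theorem posErr_nonneg : 0 ≤ posErr ω g := by
  rw [posErr, Finset.sum_boole]
  positivity

theorem negErr_nonneg : 0 ≤ negErr ω g := by
  rw [negErr, Finset.sum_boole]
  positivity

theorem posErr_le_nPos : posErr ω g ≤ nPos ω := by
  rw [posErr, Finset.sum_boole, nPos]
  exact_mod_cast Finset.card_le_card (Finset.monotone_filter_right _ fun _ _ => And.left)

theorem negErr_le_sub_nPos : negErr ω g ≤ n - nPos ω := by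
  have hsplit := Finset.card_filter_add_card_filter_not (s := Finset.univ)
    fun i => (ω i).2 = true
  rw [Finset.card_univ, Fintype.card_fin] at hsplit
  rw [negErr, Finset.sum_boole, nPos, le_sub_iff_add_le']
  exact_mod_cast (Nat.add_le_add_left (Finset.card_le_card
    (Finset.monotone_filter_right _ fun _ _ h => by simp [h.1])) _).trans_eq hsplit

end Sample

theorem abs_div_mul_sub_div_mul_le {c a m N q : ℝ} (hc : 0 ≤ c) (ha : 0 ≤ a) (ham : a ≤ m)
    (hN : 0 < N) (hq : 0 < q) :
    |c / m * a - c / q * (1 / N) * a| ≤ c * |m / N - q| / q := by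
  rcases ha.eq_or_lt with rfl | ha
  · simp only [mul_zero, sub_zero, abs_zero]
    positivity
  have hm : 0 < m := ha.trans_le ham
  have hfactor : c / m * a - c / q * (1 / N) * a = c / q * (a / m) * (q - m / N) := by
    field_simp
  rw [hfactor, abs_mul, abs_of_nonneg (by positivity), abs_sub_comm]
  calc c / q * (a / m) * |m / N - q| ≤ c / q * 1 * |m / N - q| := by
        gcongr
        exact div_le_one_of_le₀ ham hm.le
    _ = c * |m / N - q| / q := by ring

theorem abs_plugin_sub_ideal_le {p q ε m N a b : ℝ} (hp0 : 0 ≤ p) (hp1 : p ≤ 1) (hε : 0 < ε)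
    (hεq : ε ≤ q) (hqε : q ≤ 1 - ε) (ha : 0 ≤ a) (ham : a ≤ m) (hb : 0 ≤ b) (hbm : b ≤ N - m)
    (hN : 0 < N) :
    |(p / m * a + (1 - p) / (N - m) * b) -
        (p / q * (1 / N) * a + (1 - p) / (1 - q) * (1 / N) * b)| ≤ |m / N - q| / ε := by
  have hposGap := abs_div_mul_sub_div_mul_le hp0 ha ham hN (hε.trans_le hεq)
  have hnegGap := abs_div_mul_sub_div_mul_le (q := 1 - q) (sub_nonneg.2 hp1) hb hbm hN
    (by linarith)
  rw [show (N - m) / N - (1 - q) = -(m / N - q) by field_simp; ring, abs_neg] at hnegGap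
  calc _ = |(p / m * a - p / q * (1 / N) * a) +
        ((1 - p) / (N - m) * b - (1 - p) / (1 - q) * (1 / N) * b)| := by ring_nf
    _ ≤ p * |m / N - q| / q + (1 - p) * |m / N - q| / (1 - q) :=
        (abs_add_le _ _).trans (add_le_add hposGap hnegGap)
    _ ≤ p * |m / N - q| / ε + (1 - p) * |m / N - q| / ε := by
        gcongr
        linarith
    _ = |m / N - q| / ε := by ring

theorem plugin_vs_ideal_binary_deterministic_general
    {X : Type*}
    (p p' ε : ℝ) (hp : p ∈ Set.Ioo (0:ℝ) 1) (hε : ε ∈ Set.Ioo (0:ℝ) (1/2))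
    (hp' : p' ∈ Set.Ioo ε (1 - ε))
    (n : ℕ) (ω : Fin n → X × Bool)
    (hlt : nPos ω < n)
    (g : X → Bool) :
    |((p / (nPos ω : ℝ)) * posErr ω g +
        ((1 - p) / ((n : ℝ) - (nPos ω : ℝ))) * negErr ω g) -
      ((p / p') * (1 / (n : ℝ)) * posErr ω g +
        ((1 - p) / (1 - p')) * (1 / (n : ℝ)) * negErr ω g)| ≤
    (|(nPos ω : ℝ) / n - p'| / ε ^ 2) *
      (1 + |(nPos ω : ℝ) / n - p'| *
        (p / ((nPos ω : ℝ) / n) + (1 - p) / (1 - (nPos ω : ℝ) / n))) := by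
  obtain ⟨hp0, hp1⟩ := hp
  obtain ⟨hε0, hε1⟩ := hε
  obtain ⟨hεp', hp'ε⟩ := hp'
  have hmN : (nPos ω : ℝ) < n := by exact_mod_cast hlt
  have hN : (0 : ℝ) < n := (Nat.cast_nonneg _).trans_lt hmN
  have hgap := abs_plugin_sub_ideal_le hp0.le hp1.le hε0 hεp'.le hp'ε.le (posErr_nonneg ω g)
    (posErr_le_nPos ω g) (negErr_nonneg ω g) (negErr_le_sub_nPos ω g) hN
  have hK : 0 ≤ p / ((nPos ω : ℝ) / n) + (1 - p) / (1 - (nPos ω : ℝ) / n) := by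
    have : (nPos ω : ℝ) / n < 1 := (div_lt_one hN).2 hmN
    exact add_nonneg (by positivity) (div_nonneg (by linarith) (by linarith))
  calc _ ≤ |(nPos ω : ℝ) / n - p'| / ε := hgap
    _ ≤ |(nPos ω : ℝ) / n - p'| / ε ^ 2 :=
        div_le_div_of_nonneg_left (abs_nonneg _) (by positivity) (by nlinarith)
    _ ≤ _ := le_mul_of_one_le_right (by positivity)
        (le_add_of_nonneg_right (mul_nonneg (abs_nonneg _) hK))

/-- deterministic bound on the deviation between the plug-in
weighted empirical risk and the ideally weighted one, for binary classification
with varying class probabilities, valid for any fixed sample containing both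
labels. -/
theorem plugin_vs_ideal_binary_deterministic
    {X : Type*}
    (p p' ε : ℝ) (hp : p ∈ Set.Ioo (0:ℝ) 1) (hε : ε ∈ Set.Ioo (0:ℝ) (1/2))
    (hp' : p' ∈ Set.Ioo ε (1 - ε))
    (n : ℕ) (ω : Fin n → X × Bool)
    (hpos : 0 < nPos ω) (hlt : nPos ω < n)
    (g : X → Bool) :
    |((p / (nPos ω : ℝ)) * posErr ω g +
        ((1 - p) / ((n : ℝ) - (nPos ω : ℝ))) * negErr ω g) -
      ((p / p') * (1 / (n : ℝ)) * posErr ω g +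
        ((1 - p) / (1 - p')) * (1 / (n : ℝ)) * negErr ω g)| ≤
    (|(nPos ω : ℝ) / n - p'| / ε ^ 2) *
      (1 + |(nPos ω : ℝ) / n - p'| *
        (p / ((nPos ω : ℝ) / n) + (1 - p) / (1 - (nPos ω : ℝ) / n))) :=
  plugin_vs_ideal_binary_deterministic_general p p' ε hp hε hp' n ω hlt g
end
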